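/- arXiv:2209.04567 — 2 statements merged into one kernel-verified Lean document; each statement's English description precedes it below -/
import Mathlib

section
/- If a deterministic filter F is neighborhood comparable (NC), then its compatibility graph G_F has the compatibility-preserving zipper neighborhoods (cpzn) property with respect to its determinism-enforcing zipper constraints Z_F: for every zipper constraint (U, W) ∈ Z_F whose target is a pair W = {w0, w1}, either N[w0] ⊆ N[w1] or N[w1] ⊆ N[w0] in G_F. -/
/-- A clique cover of a simple graph: a finite family of cliques covering every vertex. -/
def SimpleGraph.IsCliqueCover {V : Type} (G : SimpleGraph V) (K : Finset (Finset V)) : Prop :=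
  (∀ s ∈ K, G.IsClique (s : Set V)) ∧ ∀ v : V, ∃ s ∈ K, v ∈ s

/-- The clique cover number: minimum number of cliques in a clique cover. -/
noncomputable def SimpleGraph.cliqueCoverNum {V : Type} (G : SimpleGraph V) : ℕ :=
  sInf {n | ∃ K : Finset (Finset V), G.IsCliqueCover K ∧ K.card = n}

/-- The closed neighborhood of a vertex. -/
def SimpleGraph.closedNbhd {V : Type} (G : SimpleGraph V) (v : V) : Set V :=
  {w | w = v ∨ G.Adj v w}

/-- A graph is chordal if every cycle of length at least four has a chord:
an edge of the graph joining two vertices of the cycle that is not an edge of the cycle. -/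
def SimpleGraph.Chordal {V : Type} (G : SimpleGraph V) : Prop :=
  ∀ (v : V) (c : G.Walk v v), c.IsCycle → 4 ≤ c.length →
    ∃ x y : V, G.Adj x y ∧ x ∈ c.support ∧ y ∈ c.support ∧ s(x, y) ∉ c.edges

/-- A deterministic (combinatorial) filter: states `S`, observations `Y`, outputs `C`,
an initial state, a partial transition function and an output function. -/
structure DFilter (S Y C : Type) where
  init : S
  tr : S → Y → Option S
  out : S → C

namespace DFilter

variable {S Y C : Type}

/-- Trace an observation sequence from a state (`none` if it crashes). -/
def run (F : DFilter S Y C) : S → List Y → Option S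
  | v, [] => some v
  | v, y :: ys => (F.tr v y).bind fun w => F.run w ys

/-- The extensions of a state: observation sequences traceable from it. -/
def Ext (F : DFilter S Y C) (v : S) : Set (List Y) :=
  {s | (F.run v s).isSome}

/-- The output sequence produced by tracing an observation sequence from a state,
reading the output at every visited state (starting with the output of the state itself). -/
def outs (F : DFilter S Y C) : S → List Y → Option (List C)
  | v, [] => some [F.out v]
  | v, y :: ys => (F.tr v y).bind fun w => (F.outs w ys).map (F.out v :: ·)

/-- Two states are compatible when the outputs they produce agree on all common extensions. -/
def Compatible (F : DFilter S Y C) (v w : S) : Prop :=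
  ∀ s : List Y, s ∈ F.Ext v → s ∈ F.Ext w → F.outs v s = F.outs w s

/-- The compatibility graph: edges join distinct compatible states. -/
def compatGraph (F : DFilter S Y C) : SimpleGraph S where
  Adj v w := v ≠ w ∧ F.Compatible v w
  symm := by
    constructor
    rintro v w ⟨hne, hc⟩
    exact ⟨hne.symm, fun s hw hv => (hc s hv hw).symm⟩
  loopless := ⟨fun v h => h.1 rfl⟩

/-- A filter is globally language comparable (GLC) when the extension sets of any two
compatible states are comparable under inclusion. -/
def GLC (F : DFilter S Y C) : Prop :=
  ∀ v w : S, F.Compatible v w → F.Ext v ⊆ F.Ext w ∨ F.Ext w ⊆ F.Ext v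

/-- A filter is neighborhood comparable (NC) when any two vertices of its compatibility
graph with intersecting closed neighborhoods have comparable closed neighborhoods. -/
def NC (F : DFilter S Y C) : Prop :=
  ∀ v w : S, (F.compatGraph.closedNbhd v ∩ F.compatGraph.closedNbhd w).Nonempty →
    F.compatGraph.closedNbhd v ⊆ F.compatGraph.closedNbhd w ∨
      F.compatGraph.closedNbhd w ⊆ F.compatGraph.closedNbhd v

/-- The target set of the determinism-enforcing zipper constraint generated by a
set of states `U` and an observation `y`: all `y`-children of members of `U`. -/
def zipTarget (F : DFilter S Y C) (U : Set S) (y : Y) : Set S :=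
  {w | ∃ u ∈ U, F.tr u y = some w}

/-- A set of mutually compatible states. -/
def MutuallyCompatible (F : DFilter S Y C) (U : Set S) : Prop :=
  ∀ u ∈ U, ∀ u' ∈ U, F.Compatible u u'

end DFilter

/-! Children of compatible states under a common observation are compatible, since every
common extension of the children, prefixed by that observation, is a common extension of the
parents. Hence the two targets `w₀, w₁` of a zipper constraint are compatible: either they
coincide, or they are adjacent in `G_F`, and then their closed neighborhoods intersect and
neighborhood comparability applies. -/

namespace DFilter

variable {S Y C : Type} (F : DFilter S Y C)

theorem run_cons_of_tr {v v' : S} {y : Y} (h : F.tr v y = some v') (s : List Y) :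
    F.run v (y :: s) = F.run v' s := by
  simp only [run, h, Option.bind_some]

theorem outs_cons_of_tr {v v' : S} {y : Y} (h : F.tr v y = some v') (s : List Y) :
    F.outs v (y :: s) = (F.outs v' s).map (F.out v :: ·) := by
  simp only [outs, h, Option.bind_some]

theorem cons_mem_Ext_iff {v v' : S} {y : Y} (h : F.tr v y = some v') (s : List Y) :
    y :: s ∈ F.Ext v ↔ s ∈ F.Ext v' := by
  simp only [Ext, Set.mem_ofPred_eq, F.run_cons_of_tr h]

variable {F}

theorem Compatible.tr {v w v' w' : S} {y : Y} (hvw : F.Compatible v w)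
    (hv : F.tr v y = some v') (hw : F.tr w y = some w') : F.Compatible v' w' := by
  intro s hs hs'
  have hcons := hvw (y :: s) ((F.cons_mem_Ext_iff hv s).2 hs) ((F.cons_mem_Ext_iff hw s).2 hs')
  rw [F.outs_cons_of_tr hv, F.outs_cons_of_tr hw] at hcons
  -- mapping `List.tail` strips the parents' outputs, prepended to the children's
  simpa [Option.map_map, Function.comp_def] using congrArg (Option.map List.tail) hcons

theorem MutuallyCompatible.zipTarget {U : Set S} (hU : F.MutuallyCompatible U) (y : Y) :
    F.MutuallyCompatible (F.zipTarget U y) := by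
  rintro w ⟨u, hu, huw⟩ w' ⟨u', hu', huw'⟩
  exact (hU u hu u' hu').tr huw huw'

theorem NC.closedNbhd_comparable_of_compatible (hnc : F.NC) {v w : S} (hvw : F.Compatible v w) :
    F.compatGraph.closedNbhd v ⊆ F.compatGraph.closedNbhd w ∨
      F.compatGraph.closedNbhd w ⊆ F.compatGraph.closedNbhd v := by
  obtain rfl | hne := eq_or_ne v w
  · exact Or.inl subset_rfl
  · exact hnc v w ⟨w, Or.inr ⟨hne, hvw⟩, Or.inl rfl⟩

end DFilter

/-- A neighborhood comparable filter has the cpzn property: for every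
determinism-enforcing zipper constraint whose target is a pair `{w₀, w₁}`, the closed
neighborhoods of `w₀` and `w₁` in the compatibility graph are comparable. -/
theorem nc_cpzn {S Y C : Type} (F : DFilter S Y C) (hnc : F.NC) :
    ∀ (U : Set S) (y : Y) (w₀ w₁ : S), F.MutuallyCompatible U →
      F.zipTarget U y = {w₀, w₁} →
      F.compatGraph.closedNbhd w₀ ⊆ F.compatGraph.closedNbhd w₁ ∨
        F.compatGraph.closedNbhd w₁ ⊆ F.compatGraph.closedNbhd w₀ := by
  intro U y w₀ w₁ hU hpair
  have hW := hU.zipTarget y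
  rw [hpair] at hW
  exact hnc.closedNbhd_comparable_of_compatible (hW w₀ (by simp) w₁ (by simp))
end

section
/- If a deterministic filter F has no missing edges (NME), then Ext(v) = Y* for every state v; consequently F is globally language comparable (GLC), and the compatibility relation of F is transitive, so F is also neighborhood comparable (NC). -/
/-! Without missing edges every observation sequence can be traced from every state, so
compatibility means producing the same outputs on all of `Y*`. That relation is an
equivalence, and the closed neighborhoods in the compatibility graph are its classes, which
are either disjoint or equal. -/

namespace DFilter

variable {S Y C : Type} {F : DFilter S Y C}

theorem compatible_refl (v : S) : F.Compatible v v := fun _ _ _ => rfl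

theorem Compatible.symm {v w : S} (h : F.Compatible v w) : F.Compatible w v :=
  fun s hw hv => (h s hv hw).symm

theorem mem_closedNbhd_compatGraph {v w : S} :
    w ∈ F.compatGraph.closedNbhd v ↔ F.Compatible v w := by
  constructor
  · rintro (rfl | ⟨-, h⟩)
    exacts [compatible_refl w, h]
  · intro h
    by_cases hwv : w = v
    · exact Or.inl hwv
    · exact Or.inr ⟨Ne.symm hwv, h⟩

theorem closedNbhd_compatGraph_subset_of_compatible (htrans : Transitive F.Compatible)
    {v w : S} (h : F.Compatible v w) :
    F.compatGraph.closedNbhd w ⊆ F.compatGraph.closedNbhd v := fun _ hu =>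
  mem_closedNbhd_compatGraph.mpr (htrans h (mem_closedNbhd_compatGraph.mp hu))

theorem nc_of_transitive (htrans : Transitive F.Compatible) : F.NC := by
  rintro v w ⟨u, hvu, hwu⟩
  have hvw : F.Compatible v w :=
    htrans (mem_closedNbhd_compatGraph.mp hvu) (mem_closedNbhd_compatGraph.mp hwu).symm
  exact Or.inr (closedNbhd_compatGraph_subset_of_compatible htrans hvw)

section NoMissingEdges

variable (hnme : ∀ (v : S) (y : Y), (F.tr v y).isSome)
include hnme

theorem run_isSome (s : List Y) (v : S) : (F.run v s).isSome := by
  induction s generalizing v with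
  | nil => rfl
  | cons y ys ih =>
    obtain ⟨w, hw⟩ := Option.isSome_iff_exists.mp (hnme v y)
    rw [DFilter.run, hw, Option.bind_some]
    exact ih w

theorem ext_eq_univ (v : S) : F.Ext v = Set.univ :=
  Set.eq_univ_of_forall fun s => run_isSome hnme s v

theorem glc : F.GLC := fun v w _ =>
  Or.inl (by rw [ext_eq_univ hnme v, ext_eq_univ hnme w])

theorem compatible_iff_outs_eq {v w : S} :
    F.Compatible v w ↔ ∀ s : List Y, F.outs v s = F.outs w s :=
  ⟨fun h s => h s (run_isSome hnme s v) (run_isSome hnme s w), fun h s _ _ => h s⟩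

theorem transitive_compatible : Transitive F.Compatible := fun _ _ _ huv hvw =>
  (compatible_iff_outs_eq hnme).mpr fun s =>
    ((compatible_iff_outs_eq hnme).mp huv s).trans ((compatible_iff_outs_eq hnme).mp hvw s)

end NoMissingEdges

end DFilter

/-- A filter with no missing edges has `Ext v = Y*` for every state `v`; consequently it
is globally language comparable, its compatibility relation is transitive, and it is
neighborhood comparable. -/
theorem nme_glc_and_nc {S Y C : Type} (F : DFilter S Y C)
    (hnme : ∀ (v : S) (y : Y), (F.tr v y).isSome) :
    (∀ v : S, F.Ext v = Set.univ) ∧ F.GLC ∧ Transitive F.Compatible ∧ F.NC :=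
  ⟨DFilter.ext_eq_univ hnme, DFilter.glc hnme, DFilter.transitive_compatible hnme,
    DFilter.nc_of_transitive (DFilter.transitive_compatible hnme)⟩
end
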